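/- arXiv:0712.3962 — 3 statements merged into one kernel-verified Lean document; each statement's English description precedes it below -/
import Mathlib

section
/- Let F = Σ_{k≥0} (ξ^k/k!) h(h−1)⋯(h−k+1) ⊗ e^k be the Jordanian twist in U(b) ⊗ U(b)[[ξ]] where [h,e] = e, and let S be the antipode of U(b) (S(h) = −h, S(e) = −e). Then u := Σ_i f_i^{(1)} S(f_i^{(2)}) = Σ_{k≥0} ((−ξ)^k/k!) h(h−1)⋯(h−k+1) e^k = exp(−ξ h e). -/
open scoped TensorProduct

noncomputable def expPS {A : Type*} [Ring A] [Algebra ℚ A] (X : PowerSeries A) :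
    PowerSeries A :=
  PowerSeries.mk fun m =>
    ∑ n ∈ Finset.range (m + 1), ((n.factorial : ℚ)⁻¹) • (PowerSeries.coeff m) (X ^ n)

/-- The falling factorial `a(a−1)⋯(a−k+1)`. -/
noncomputable def fallFac {A : Type*} [Ring A] (a : A) (k : ℕ) : A :=
  ((List.range k).map (fun j : ℕ => a - (j : A))).prod

/-!
Since `S` is an anti-homomorphism with `S e = -e`, it sends `e^k` to `(-1)^k e^k`, so the `k`-th
coefficient of `u` is `((-1)^k / k!) h(h-1)⋯(h-k+1) e^k`. The relation `e h = (h - 1) e` gives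
`e^k h = (h - k) e^k`, hence `(h e)^k = h(h-1)⋯(h-k+1) e^k`, and this coefficient is
`(-h e)^k / k!`, the `k`-th coefficient of `exp(-ξ h e)`.
-/

section FallingFactorial

variable {A : Type*} [Ring A]

theorem fallFac_zero (a : A) : fallFac a 0 = 1 := by
  simp [fallFac]

theorem fallFac_succ (a : A) (k : ℕ) : fallFac a (k + 1) = fallFac a k * (a - (k : A)) := by
  simp [fallFac, List.range_succ]

theorem pow_mul_eq_sub_mul_pow {h e : A} (hhe : h * e - e * h = e) (k : ℕ) :
    e ^ k * h = (h - (k : A)) * e ^ k := by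
  induction k with
  | zero => simp
  | succ k ih =>
    have heh : e * h = h * e - e := by rw [← sub_sub_cancel (h * e) (e * h), hhe]
    calc e ^ (k + 1) * h = e ^ k * (h * e) - e ^ k * e := by
          rw [pow_succ, mul_assoc, heh, mul_sub]
      _ = (h - (k : A)) * e ^ k * e - e ^ k * e := by rw [← mul_assoc, ih]
      _ = (h - ((k + 1 : ℕ) : A)) * e ^ (k + 1) := by
          push_cast
          rw [pow_succ]
          noncomm_ring

theorem mul_pow_eq_fallFac_mul_pow {h e : A} (hhe : h * e - e * h = e) (k : ℕ) :
    (h * e) ^ k = fallFac h k * e ^ k := by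
  induction k with
  | zero => simp [fallFac_zero]
  | succ k ih =>
    calc (h * e) ^ (k + 1) = fallFac h k * (e ^ k * h) * e := by
          rw [pow_succ, ih, mul_assoc, mul_assoc, mul_assoc]
      _ = fallFac h (k + 1) * e ^ (k + 1) := by
          rw [pow_mul_eq_sub_mul_pow hhe, fallFac_succ, pow_succ, ← mul_assoc, ← mul_assoc,
            mul_assoc]

end FallingFactorial

theorem map_pow_of_map_mul_rev {A B : Type*} [Monoid A] [Monoid B] {f : A → B} (hf1 : f 1 = 1)
    (hfmul : ∀ a b, f (a * b) = f b * f a) (a : A) (k : ℕ) : f (a ^ k) = f a ^ k := by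
  induction k with
  | zero => simpa using hf1
  | succ k ih => rw [pow_succ', hfmul, ih, pow_succ]

theorem PowerSeries.monomial_one_pow {R : Type*} [Semiring R] (a : R) (n : ℕ) :
    monomial 1 a ^ n = monomial n (a ^ n) := by
  induction n with
  | zero => simp
  | succ n ih => rw [pow_succ, ih, monomial_mul_monomial, pow_succ]

theorem expPS_monomial_one {A : Type*} [Ring A] [Algebra ℚ A] (c : A) :
    expPS (PowerSeries.monomial 1 c) = PowerSeries.mk fun m => ((m.factorial : ℚ)⁻¹) • c ^ m := by
  ext m
  simp only [expPS, PowerSeries.coeff_mk, PowerSeries.monomial_one_pow,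
    PowerSeries.coeff_monomial, smul_ite, smul_zero]
  rw [Finset.sum_ite_eq, if_pos (Finset.self_mem_range_succ m)]

theorem jordanian_twist_u_element_general {A : Type*} [Ring A] [Algebra ℚ A]
    (h e : A) (hhe : h * e - e * h = e)
    (S : A →ₗ[ℚ] A)
    (hS1 : S 1 = 1)
    (hSmul : ∀ a b : A, S (a * b) = S b * S a)
    (hSe : S e = -e) :
    -- the Jordanian twist
    let F : PowerSeries (A ⊗[ℚ] A) :=
      PowerSeries.mk fun k => ((k.factorial : ℚ)⁻¹) • (fallFac h k ⊗ₜ[ℚ] (e ^ k))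
    -- the map x ⊗ y ↦ x · S(y)
    let muS : (A ⊗[ℚ] A) →ₗ[ℚ] A :=
      (LinearMap.mul' ℚ A).comp (TensorProduct.map LinearMap.id S)
    -- u = Σ_i f_i⁽¹⁾ S(f_i⁽²⁾), applied coefficientwise
    let u : PowerSeries A := PowerSeries.mk fun k => muS (PowerSeries.coeff k F)
    u = (PowerSeries.mk fun k =>
          (((-1 : ℚ) ^ k) * (k.factorial : ℚ)⁻¹) • (fallFac h k * e ^ k)) ∧
    u = expPS (PowerSeries.mk fun m => if m = 1 then -(h * e) else 0) := by
  intro F muS u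
  have hSe_pow (k : ℕ) : S (e ^ k) = ((-1 : ℚ) ^ k) • e ^ k := by
    rw [map_pow_of_map_mul_rev hS1 hSmul, hSe, ← neg_one_smul ℚ e, smul_pow]
  have hu : u = PowerSeries.mk fun k =>
      (((-1 : ℚ) ^ k) * (k.factorial : ℚ)⁻¹) • (fallFac h k * e ^ k) := by
    ext k
    simp only [u, F, muS, PowerSeries.coeff_mk, map_smul, LinearMap.comp_apply,
      TensorProduct.map_tmul, LinearMap.id_apply, LinearMap.mul'_apply, hSe_pow,
      mul_smul_comm, smul_smul, mul_comm]
  have hX : (PowerSeries.mk fun m => if m = 1 then -(h * e) else 0)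
      = PowerSeries.monomial 1 (-(h * e)) := by
    ext m
    rw [PowerSeries.coeff_mk, PowerSeries.coeff_monomial]
  refine ⟨hu, ?_⟩
  rw [hu, hX, expPS_monomial_one]
  ext k
  rw [PowerSeries.coeff_mk, PowerSeries.coeff_mk, ← neg_one_smul ℚ (h * e), smul_pow,
    mul_pow_eq_fallFac_mul_pow hhe, smul_smul, mul_comm]

/-- for the Jordanian twist `F = Σ_k (ξ^k/k!) h(h−1)⋯(h−k+1) ⊗ e^k`, the
Drinfeld element `u = Σ f⁽¹⁾S(f⁽²⁾)` equals
`Σ_k ((−ξ)^k/k!) h(h−1)⋯(h−k+1) e^k = exp(−ξ h e)`. -/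
theorem jordanian_twist_u_element {A : Type*} [Ring A] [Algebra ℚ A]
    (h e : A) (hhe : h * e - e * h = e)
    (S : A →ₗ[ℚ] A)
    (hS1 : S 1 = 1)
    (hSmul : ∀ a b : A, S (a * b) = S b * S a)
    (hSh : S h = -h) (hSe : S e = -e) :
    -- the Jordanian twist
    let F : PowerSeries (A ⊗[ℚ] A) :=
      PowerSeries.mk fun k => ((k.factorial : ℚ)⁻¹) • (fallFac h k ⊗ₜ[ℚ] (e ^ k))
    -- the map x ⊗ y ↦ x · S(y)
    let muS : (A ⊗[ℚ] A) →ₗ[ℚ] A :=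
      (LinearMap.mul' ℚ A).comp (TensorProduct.map LinearMap.id S)
    -- u = Σ_i f_i⁽¹⁾ S(f_i⁽²⁾), applied coefficientwise
    let u : PowerSeries A := PowerSeries.mk fun k => muS (PowerSeries.coeff k F)
    u = (PowerSeries.mk fun k =>
          (((-1 : ℚ) ^ k) * (k.factorial : ℚ)⁻¹) • (fallFac h k * e ^ k)) ∧
    u = expPS (PowerSeries.mk fun m => if m = 1 then -(h * e) else 0) :=
  jordanian_twist_u_element_general h e hhe S hS1 hSmul hSe
end

section
/- In sl(2,ℂ) ⊕ sl(2,ℂ) with commuting sl(2)-triples (H₁, E_{1±}) and (H₂, E_{2±}), the two-tensor r'₃ = 2(β + iα) E_{1+} ∧ E_{1−} + 2(β − iα) E_{2+} ∧ E_{2−} satisfies the modified (non-homogeneous) classical Yang–Baxter equation: the expression [r^{12}, r^{13}] + [r^{12}, r^{23}] + [r^{13}, r^{23}] equals an invariant element Ω of Λ³(sl₂ ⊕ sl₂), i.e. [x ⊗ 1 ⊗ 1 + 1 ⊗ x ⊗ 1 + 1 ⊗ 1 ⊗ x, Ω] = 0 for all x in the Lie algebra. -/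
/-!
Write `r = c₁ E₁₊ ∧ E₁₋ + c₂ E₂₊ ∧ E₂₋`. The Yang–Baxter expression is quadratic in `r`; its
mixed terms vanish because the two triples commute, and for a single wedge a direct expansion
gives `CYB(e ∧ f) = Alt(⁅e, f⁆ ⊗ e ⊗ f)`. Hence
`Ω = 2c₁² Alt(H₁ ⊗ E₁₊ ⊗ E₁₋) + 2c₂² Alt(H₂ ⊗ E₂₊ ⊗ E₂₋)`.
The diagonal action of `x` on `Alt(a ⊗ b ⊗ c)` acts as a derivation slot by slot, so each summand
is killed by its own triple (`ad` is traceless on `sl₂`) and by the other, commuting, triple.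
The elements whose diagonal action kills `Ω` form a Lie subalgebra, so invariance passes from
the generators to their Lie span.
-/

open scoped TensorProduct
open TensorProduct

section

attribute [local instance 100] LieRing.ofAssociativeRing

theorem LieHom.lie_eq_zero_of_mem_lieSpan {R L M : Type*} [CommRing R] [LieRing L]
    [LieAlgebra R L] [LieRing M] [LieAlgebra R M] (φ : L →ₗ⁅R⁆ M) {s : Set L} {m : M}
    (hs : ∀ x ∈ s, ⁅φ x, m⁆ = 0) {x : L} (hx : x ∈ LieSubalgebra.lieSpan R L s) :
    ⁅φ x, m⁆ = 0 := by
  induction hx using LieSubalgebra.lieSpan_induction with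
  | mem x hx => exact hs x hx
  | zero => simp
  | add x y _ _ hx hy => simp [hx, hy]
  | smul c x _ hx => simp [hx]
  | lie x y _ _ hx hy => rw [LieHom.map_lie, lie_lie, hx, hy, lie_zero, lie_zero, sub_zero]

section TensorCube

variable (R : Type*) {A : Type*} [CommRing R] [Ring A] [Algebra R A]

def wedge (a b : A) : A ⊗[R] A := a ⊗ₜ b - b ⊗ₜ a

-- The full antisymmetrisation of `a ⊗ b ⊗ c`, expanded along the first tensor factor.
def alt3 (a b c : A) : A ⊗[R] (A ⊗[R] A) :=
  a ⊗ₜ wedge R b c - b ⊗ₜ wedge R a c + c ⊗ₜ wedge R a b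

abbrev emb12 : A ⊗[R] A →ₐ[R] A ⊗[R] (A ⊗[R] A) :=
  Algebra.TensorProduct.map (AlgHom.id R A) Algebra.TensorProduct.includeLeft

abbrev emb13 : A ⊗[R] A →ₐ[R] A ⊗[R] (A ⊗[R] A) :=
  Algebra.TensorProduct.map (AlgHom.id R A) Algebra.TensorProduct.includeRight

abbrev emb23 : A ⊗[R] A →ₐ[R] A ⊗[R] (A ⊗[R] A) := Algebra.TensorProduct.includeRight

-- The polarisation of the classical Yang–Baxter expression: `CYB(r) = ybForm R r r`.
def ybForm : A ⊗[R] A →ₗ[R] A ⊗[R] A →ₗ[R] A ⊗[R] (A ⊗[R] A) :=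
  LinearMap.mk₂ R
    (fun r s => ⁅emb12 R r, emb13 R s⁆ + ⁅emb12 R r, emb23 R s⁆ + ⁅emb13 R r, emb23 R s⁆)
    (fun r r' s => by simp only [map_add, add_lie]; abel)
    (fun c r s => by simp only [map_smul, smul_lie (L := A ⊗[R] (A ⊗[R] A)), smul_add])
    (fun r s s' => by simp only [map_add, lie_add]; abel)
    (fun c r s => by simp only [map_smul, lie_smul (L := A ⊗[R] (A ⊗[R] A)), smul_add])

def diag3 : A →ₗ⁅R⁆ A ⊗[R] (A ⊗[R] A) where
  toFun x := x ⊗ₜ (1 ⊗ₜ 1) + 1 ⊗ₜ (x ⊗ₜ 1) + 1 ⊗ₜ (1 ⊗ₜ x)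
  map_add' x y := by simp only [add_tmul, tmul_add]; abel
  map_smul' c x := by simp only [smul_add, ← smul_tmul', tmul_smul, RingHom.id_apply]
  map_lie' {x y} := by
    simp only [Ring.lie_def, Algebra.TensorProduct.tmul_mul_tmul, mul_add, add_mul, one_mul,
      mul_one, sub_tmul, tmul_sub]
    abel

variable {R}

theorem ybForm_tmul_tmul (a b c d : A) :
    ybForm R (a ⊗ₜ b) (c ⊗ₜ d) =
      ⁅a, c⁆ ⊗ₜ (b ⊗ₜ d) + a ⊗ₜ (⁅b, c⁆ ⊗ₜ d) + a ⊗ₜ (c ⊗ₜ ⁅b, d⁆) := by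
  simp only [ybForm, LinearMap.mk₂_apply, Algebra.TensorProduct.map_tmul, AlgHom.coe_id, id_eq,
    Algebra.TensorProduct.includeLeft_apply, Algebra.TensorProduct.includeRight_apply,
    Ring.lie_def, Algebra.TensorProduct.tmul_mul_tmul, one_mul, mul_one, sub_tmul, tmul_sub]

theorem ybForm_wedge_self (a b : A) :
    ybForm R (wedge R a b) (wedge R a b) = alt3 R ⁅a, b⁆ a b := by
  simp only [wedge, alt3, map_sub, LinearMap.sub_apply, ybForm_tmul_tmul, lie_self, zero_tmul,
    tmul_zero, tmul_sub, ← lie_skew b a, neg_tmul, tmul_neg]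
  abel

theorem ybForm_wedge_wedge_of_commute {a b c d : A} (hac : Commute a c) (had : Commute a d)
    (hbc : Commute b c) (hbd : Commute b d) : ybForm R (wedge R a b) (wedge R c d) = 0 := by
  simp only [wedge, map_sub, LinearMap.sub_apply, ybForm_tmul_tmul, commute_iff_lie_eq.1, hac,
    had, hbc, hbd, zero_tmul, tmul_zero, add_zero, sub_self]

theorem ybForm_smul_wedge_add_smul_wedge {a b c d : A} (hac : Commute a c)
    (had : Commute a d) (hbc : Commute b c) (hbd : Commute b d) (s t : R) :
    ybForm R (s • wedge R a b + t • wedge R c d) (s • wedge R a b + t • wedge R c d) =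
      s ^ 2 • alt3 R ⁅a, b⁆ a b + t ^ 2 • alt3 R ⁅c, d⁆ c d := by
  simp only [map_add, map_smul, LinearMap.add_apply, LinearMap.smul_apply, ybForm_wedge_self,
    ybForm_wedge_wedge_of_commute hac had hbc hbd,
    ybForm_wedge_wedge_of_commute hac.symm hbc.symm had.symm hbd.symm, smul_zero, add_zero,
    zero_add]
  module

theorem alt3_smul_left (t : R) (a b c : A) : alt3 R (t • a) b c = t • alt3 R a b c := by
  simp only [alt3, wedge, ← smul_tmul', tmul_smul, smul_sub, smul_add, tmul_sub]

theorem lie_diag3_tmul (x a b c : A) :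
    ⁅diag3 R x, a ⊗ₜ[R] (b ⊗ₜ[R] c)⁆ =
      ⁅x, a⁆ ⊗ₜ (b ⊗ₜ c) + a ⊗ₜ (⁅x, b⁆ ⊗ₜ c) + a ⊗ₜ (b ⊗ₜ ⁅x, c⁆) := by
  simp only [diag3, LieHom.coe_mk, Ring.lie_def, Algebra.TensorProduct.tmul_mul_tmul, one_mul,
    mul_one, add_mul, mul_add, sub_tmul, tmul_sub]
  abel

theorem lie_diag3_alt3 (x a b c : A) :
    ⁅diag3 R x, alt3 R a b c⁆ = alt3 R ⁅x, a⁆ b c + alt3 R a ⁅x, b⁆ c + alt3 R a b ⁅x, c⁆ := by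
  simp only [alt3, wedge, tmul_sub, lie_sub, lie_add, lie_diag3_tmul]
  abel

theorem lie_diag3_alt3_eq_zero_of_lie_eq_zero {x a b c : A} (ha : ⁅x, a⁆ = 0) (hb : ⁅x, b⁆ = 0)
    (hc : ⁅x, c⁆ = 0) : ⁅diag3 R x, alt3 R a b c⁆ = 0 := by
  rw [lie_diag3_alt3, ha, hb, hc]
  simp [alt3, wedge]

-- `ad x` preserves `span {h, e, f}` and is traceless on it, while `alt3` is alternating.
theorem lie_diag3_alt3_eq_zero_of_sl2 {h e f : A} (he : ⁅h, e⁆ = e) (hf : ⁅h, f⁆ = -f)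
    (hef : ⁅e, f⁆ = (2 : R) • h) {x : A} (hx : x = h ∨ x = e ∨ x = f) :
    ⁅diag3 R x, alt3 R h e f⁆ = 0 := by
  have eh : ⁅e, h⁆ = -e := by rw [← lie_skew, he]
  have fh : ⁅f, h⁆ = f := by rw [← lie_skew, hf, neg_neg]
  have fe : ⁅f, e⁆ = -((2 : R) • h) := by rw [← lie_skew, hef]
  rw [lie_diag3_alt3]
  rcases hx with rfl | rfl | rfl <;>
  · simp only [lie_self, he, hf, hef, eh, fh, fe, alt3, wedge, tmul_sub, neg_tmul, tmul_neg,
      zero_tmul, tmul_zero, ← smul_tmul', tmul_smul]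
    module

end TensorCube

theorem lie_diag3_alt3_eq_zero_of_mem_lieSpan {R L A : Type*} [CommRing R] [LieRing L]
    [LieAlgebra R L] [Ring A] [Algebra R A] (j : L →ₗ⁅R⁆ A) {h e f : L} (he : ⁅h, e⁆ = e)
    (hf : ⁅h, f⁆ = -f) (hef : ⁅e, f⁆ = (2 : R) • h) {s : Set L}
    (hs : ∀ y ∈ s, ⁅y, h⁆ = 0 ∧ ⁅y, e⁆ = 0 ∧ ⁅y, f⁆ = 0) {x : L}
    (hx : x ∈ LieSubalgebra.lieSpan R L (insert h (insert e (insert f s)))) :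
    ⁅diag3 R (j x), alt3 R (j h) (j e) (j f)⁆ = 0 := by
  have hj (a b : L) : ⁅j a, j b⁆ = j ⁅a, b⁆ := (j.map_lie a b).symm
  refine ((diag3 R).comp j).lie_eq_zero_of_mem_lieSpan (fun y hy => ?_) hx
  rw [LieHom.coe_comp, Function.comp_apply]
  obtain hy | hy := (by simpa only [Set.mem_insert_iff, or_assoc] using hy :
    (y = h ∨ y = e ∨ y = f) ∨ y ∈ s)
  · exact lie_diag3_alt3_eq_zero_of_sl2 (by rw [hj, he]) (by rw [hj, hf, map_neg])
      (by rw [hj, hef, map_smul]) (hy.imp (congrArg j) (Or.imp (congrArg j) (congrArg j)))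
  · obtain ⟨hyh, hye, hyf⟩ := hs y hy
    exact lie_diag3_alt3_eq_zero_of_lie_eq_zero (by rw [hj, hyh, map_zero])
      (by rw [hj, hye, map_zero]) (by rw [hj, hyf, map_zero])

theorem lie_diag3_ybForm_eq_zero {R L A : Type*} [CommRing R] [LieRing L] [LieAlgebra R L]
    [Ring A] [Algebra R A] (j : L →ₗ⁅R⁆ A) {H1 E1p E1m H2 E2p E2m : L}
    (t1a : ⁅H1, E1p⁆ = E1p) (t1b : ⁅H1, E1m⁆ = -E1m) (t1c : ⁅E1p, E1m⁆ = (2 : R) • H1)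
    (t2a : ⁅H2, E2p⁆ = E2p) (t2b : ⁅H2, E2m⁆ = -E2m) (t2c : ⁅E2p, E2m⁆ = (2 : R) • H2)
    (c0 : ⁅H1, H2⁆ = 0) (c1 : ⁅H1, E2p⁆ = 0) (c2 : ⁅H1, E2m⁆ = 0)
    (c3 : ⁅H2, E1p⁆ = 0) (c4 : ⁅H2, E1m⁆ = 0)
    (c5 : ⁅E1p, E2p⁆ = 0) (c6 : ⁅E1p, E2m⁆ = 0) (c7 : ⁅E1m, E2p⁆ = 0) (c8 : ⁅E1m, E2m⁆ = 0)
    (s t : R) {x : L} (hx : x ∈ LieSubalgebra.lieSpan R L {H1, E1p, E1m, H2, E2p, E2m}) :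
    ⁅diag3 R (j x), ybForm R (s • wedge R (j E1p) (j E1m) + t • wedge R (j E2p) (j E2m))
      (s • wedge R (j E1p) (j E1m) + t • wedge R (j E2p) (j E2m))⁆ = 0 := by
  have hcomm {a b : L} (hab : ⁅a, b⁆ = 0) : Commute (j a) (j b) :=
    commute_iff_lie_eq.2 (by rw [← LieHom.map_lie, hab, map_zero])
  rw [ybForm_smul_wedge_add_smul_wedge (hcomm c5) (hcomm c6) (hcomm c7) (hcomm c8),
    ← LieHom.map_lie, t1c, ← LieHom.map_lie, t2c, map_smul, map_smul, alt3_smul_left,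
    alt3_smul_left]
  have rev {a b : L} (hab : ⁅a, b⁆ = 0) : ⁅b, a⁆ = 0 := by rw [← lie_skew, hab, neg_zero]
  have h1 := lie_diag3_alt3_eq_zero_of_mem_lieSpan j t1a t1b t1c (s := {H2, E2p, E2m})
    (by simp only [Set.mem_insert_iff, Set.mem_singleton_iff, forall_eq_or_imp, forall_eq]
        exact ⟨⟨rev c0, c3, c4⟩, ⟨rev c1, rev c5, rev c7⟩, ⟨rev c2, rev c6, rev c8⟩⟩) hx
  have hswap : ({H1, E1p, E1m, H2, E2p, E2m} : Set L) ⊆ {H2, E2p, E2m, H1, E1p, E1m} := by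
    intro y
    simp only [Set.mem_insert_iff, Set.mem_singleton_iff]
    tauto
  have h2 := lie_diag3_alt3_eq_zero_of_mem_lieSpan j t2a t2b t2c (s := {H1, E1p, E1m})
    (by simp only [Set.mem_insert_iff, Set.mem_singleton_iff, forall_eq_or_imp, forall_eq]
        exact ⟨⟨c0, c1, c2⟩, ⟨rev c3, c5, c6⟩, ⟨rev c4, c7, c8⟩⟩)
    (LieSubalgebra.lieSpan_mono hswap hx)
  rw [lie_add, lie_smul, lie_smul, lie_smul, lie_smul, h1, h2]
  simp only [smul_zero, add_zero]

end

/-- in `sl(2,ℂ) ⊕ sl(2,ℂ)`, the r-matrix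
`r'₃ = 2(β+iα) E₁₊ ∧ E₁₋ + 2(β−iα) E₂₊ ∧ E₂₋` satisfies the modified CYBE: its
Yang–Baxter expression is an ad-invariant element of the third tensor power. -/
theorem sl2sl2_standard_r_matrix_mcybe {L : Type*} [LieRing L] [LieAlgebra ℂ L]
    (H1 E1p E1m H2 E2p E2m : L)
    (t1a : ⁅H1, E1p⁆ = E1p) (t1b : ⁅H1, E1m⁆ = -E1m) (t1c : ⁅E1p, E1m⁆ = (2 : ℂ) • H1)
    (t2a : ⁅H2, E2p⁆ = E2p) (t2b : ⁅H2, E2m⁆ = -E2m) (t2c : ⁅E2p, E2m⁆ = (2 : ℂ) • H2)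
    (c0 : ⁅H1, H2⁆ = 0) (c1 : ⁅H1, E2p⁆ = 0) (c2 : ⁅H1, E2m⁆ = 0)
    (c3 : ⁅H2, E1p⁆ = 0) (c4 : ⁅H2, E1m⁆ = 0)
    (c5 : ⁅E1p, E2p⁆ = 0) (c6 : ⁅E1p, E2m⁆ = 0) (c7 : ⁅E1m, E2p⁆ = 0) (c8 : ⁅E1m, E2m⁆ = 0)
    (α β : ℂ) :
    let A := UniversalEnvelopingAlgebra ℂ L
    let ι : L → A := fun v => UniversalEnvelopingAlgebra.ι ℂ v
    let w : L → L → A ⊗[ℂ] A := fun a b => ι a ⊗ₜ[ℂ] ι b - ι b ⊗ₜ[ℂ] ι a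
    let r : A ⊗[ℂ] A :=
      (2 * (β + Complex.I * α)) • w E1p E1m + (2 * (β - Complex.I * α)) • w E2p E2m
    let E12 : (A ⊗[ℂ] A) →ₐ[ℂ] A ⊗[ℂ] (A ⊗[ℂ] A) :=
      Algebra.TensorProduct.map (AlgHom.id ℂ A) Algebra.TensorProduct.includeLeft
    let E13 : (A ⊗[ℂ] A) →ₐ[ℂ] A ⊗[ℂ] (A ⊗[ℂ] A) :=
      Algebra.TensorProduct.map (AlgHom.id ℂ A) Algebra.TensorProduct.includeRight
    let E23 : (A ⊗[ℂ] A) →ₐ[ℂ] A ⊗[ℂ] (A ⊗[ℂ] A) := Algebra.TensorProduct.includeRight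
    -- the Yang–Baxter expression Ω of r'₃
    let Ω : A ⊗[ℂ] (A ⊗[ℂ] A) := ⁅E12 r, E13 r⁆ + ⁅E12 r, E23 r⁆ + ⁅E13 r, E23 r⁆
    -- Ω is invariant: for all x in the Lie algebra generated by the six generators,
    -- [x⊗1⊗1 + 1⊗x⊗1 + 1⊗1⊗x, Ω] = 0
    ∀ x ∈ LieSubalgebra.lieSpan ℂ L {H1, E1p, E1m, H2, E2p, E2m},
      ⁅ι x ⊗ₜ[ℂ] ((1 : A) ⊗ₜ[ℂ] (1 : A)) + (1 : A) ⊗ₜ[ℂ] (ι x ⊗ₜ[ℂ] (1 : A)) +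
        (1 : A) ⊗ₜ[ℂ] ((1 : A) ⊗ₜ[ℂ] ι x), Ω⁆ = 0 := by
  intro A ι w r E12 E13 E23 Ω x hx
  exact lie_diag3_ybForm_eq_zero (UniversalEnvelopingAlgebra.ι ℂ) t1a t1b t1c t2a t2b t2c
    c0 c1 c2 c3 c4 c5 c6 c7 c8 _ _ hx
end

section
/- Let b be the Lie algebra with [h, e] = e and consider the Jordanian twist F = exp(2h ⊗ σ), σ = ½ log(1 + ξe), in U(b)⊗U(b)[[ξ]]. The twisted coproduct Δ^F(x) = FΔ(x)F^{−1} satisfies Δ^F(e) = e ⊗ e^{2σ} + 1 ⊗ e, equivalently Δ^F(e^{2σ}) = e^{2σ} ⊗ e^{2σ}, where e^{2σ} = 1 + ξe. -/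
/-!
Write `2σ = log(1 + ξe)`. It is a power series in `e` alone, so `exp(2σ) = 1 + ξe` is the
identity `exp(log(1 + t)) = 1 + t` of `ℚ⟦t⟧` under the substitution `t ↦ ξe`. The twist is
`F = exp H` with `H = (h ⊗ 1) S` and `S = 1 ⊗ 2σ`. From `[h, e] = e` one gets
`H (e ⊗ 1) = (e ⊗ 1)(H + S)`, and as `S` commutes with `H`,
`F (e ⊗ 1) F⁻¹ = (e ⊗ 1) exp S = e ⊗ (1 + ξe)`, while `1 ⊗ e` commutes with `F`. Conjugation by
`F` is multiplicative, so `Δ^F(1 + ξe) = 1 + ξ Δ^F(e)`, which factors as `(1 + ξe) ⊗ (1 + ξe)`.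
-/

open scoped TensorProduct

open PowerSeries

section Semiring

open Finset

variable {R : Type*} [Semiring R]

theorem coeff_pow_eq_zero_of_lt {f : R⟦X⟧} (hf : constantCoeff f = 0) {m n : ℕ} (h : m < n) :
    coeff m (f ^ n) = 0 :=
  coeff_of_lt_order m <| (Nat.cast_lt.2 h).trans_le (le_order_pow_of_constantCoeff_eq_zero n hf)

theorem coeff_pow_mul_pow_eq_zero_of_lt {f g : R⟦X⟧} (hf : constantCoeff f = 0)
    (hg : constantCoeff g = 0) {m a b : ℕ} (h : m < a + b) : coeff m (f ^ a * g ^ b) = 0 := by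
  refine coeff_of_lt_order m <| lt_of_lt_of_le ?_ (le_order_mul _ _)
  grw [← le_order_pow_of_constantCoeff_eq_zero a hf, ← le_order_pow_of_constantCoeff_eq_zero b hg]
  exact_mod_cast h

theorem coeff_mul_eq_of_coeff_eq {f f' g g' : R⟦X⟧} {m : ℕ}
    (hf : ∀ i ≤ m, coeff i f = coeff i f') (hg : ∀ i ≤ m, coeff i g = coeff i g') :
    coeff m (f * g) = coeff m (f' * g') := by
  simp only [coeff_mul]
  refine sum_congr rfl fun p hp => ?_
  rw [HasAntidiagonal.mem_antidiagonal] at hp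
  rw [hf p.1 (by omega), hg p.2 (by omega)]

theorem commute_C_of_forall_coeff {c : R} {f : R⟦X⟧}
    (h : ∀ m, Commute c (coeff m f)) : Commute (C c) f := by
  ext m
  rw [coeff_C_mul, coeff_mul_C, (h m).eq]

end Semiring

section ExpSeries

open Finset

variable {R : Type*} [Ring R] [Algebra ℚ R]

theorem coeff_expPS_eq_coeff_sum {f : R⟦X⟧} (hf : constantCoeff f = 0) {m M : ℕ} (h : m ≤ M) :
    coeff m (expPS f) = coeff m (∑ n ∈ range (M + 1), (n.factorial : ℚ)⁻¹ • f ^ n) := by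
  simp only [expPS, coeff_mk, map_sum, coeff_smul]
  refine sum_subset (range_subset_range.2 (by omega)) fun n _ hn => ?_
  rw [coeff_pow_eq_zero_of_lt hf (by simpa using hn), smul_zero]

theorem constantCoeff_expPS (f : R⟦X⟧) : constantCoeff (expPS f) = 1 := by
  simp [expPS]

theorem expPS_zero : expPS (0 : R⟦X⟧) = 1 := by
  ext m
  rw [expPS, coeff_mk, sum_eq_single 0 (fun n _ hn => by simp [zero_pow hn]) (by simp)]
  simp

theorem Commute.inv_factorial_smul_add_pow {a b : R} (hab : Commute a b) (n : ℕ) :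
    (n.factorial : ℚ)⁻¹ • (a + b) ^ n =
      ∑ k ∈ range (n + 1),
        ((k.factorial : ℚ)⁻¹ * ((n - k).factorial : ℚ)⁻¹) • (a ^ k * b ^ (n - k)) := by
  rw [hab.add_pow, smul_sum]
  refine sum_congr rfl fun k hk => ?_
  have hkn : k ≤ n := Nat.lt_succ_iff.1 (mem_range.1 hk)
  rw [← (Nat.cast_commute _ _).eq, ← nsmul_eq_mul, ← Nat.cast_smul_eq_nsmul ℚ, smul_smul,
    Nat.cast_choose ℚ hkn]
  congr 1
  field_simp

theorem expPS_add {f g : R⟦X⟧} (hf : constantCoeff f = 0) (hg : constantCoeff g = 0)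
    (hfg : Commute f g) : expPS (f + g) = expPS f * expPS g := by
  ext m
  set c : ℕ → ℕ → R := fun a b =>
    ((a.factorial : ℚ)⁻¹ * (b.factorial : ℚ)⁻¹) • coeff m (f ^ a * g ^ b)
  have hc : ∀ a b, m < a + b → c a b = 0 := fun a b h => by
    simp only [c, coeff_pow_mul_pow_eq_zero_of_lt hf hg h, smul_zero]
  have hsum : constantCoeff (f + g) = 0 := by rw [map_add, hf, hg, add_zero]
  have hlhs :
      coeff m (expPS (f + g)) = ∑ n ∈ range (m + 1), ∑ k ∈ range (n + 1), c k (n - k) := by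
    simp only [coeff_expPS_eq_coeff_sum hsum le_rfl, hfg.inv_factorial_smul_add_pow, map_sum,
      coeff_smul, c]
  have hrhs :
      coeff m (expPS f * expPS g) = ∑ a ∈ range (m + 1), ∑ b ∈ range (m + 1), c a b := by
    rw [coeff_mul_eq_of_coeff_eq (fun i hi => coeff_expPS_eq_coeff_sum hf hi)
      (fun i hi => coeff_expPS_eq_coeff_sum hg hi), sum_mul_sum]
    simp only [smul_mul_smul_comm, map_sum, coeff_smul, c]
  rw [hlhs, hrhs, sum_range_diag_flip]
  refine sum_congr rfl fun a _ => sum_subset (range_subset_range.2 (by omega)) fun b _ hb => ?_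
  exact hc a b (by simp only [mem_range] at hb; omega)

theorem expPS_mul_expPS_neg {f : R⟦X⟧} (hf : constantCoeff f = 0) :
    expPS f * expPS (-f) = 1 := by
  rw [← expPS_add hf (by rw [map_neg, hf, neg_zero]) (Commute.refl f).neg_right, add_neg_cancel,
    expPS_zero]

theorem isUnit_expPS {f : R⟦X⟧} (hf : constantCoeff f = 0) : IsUnit (expPS f) := by
  have hf' : constantCoeff (-f) = 0 := by rw [map_neg, hf, neg_zero]
  refine ⟨⟨expPS f, expPS (-f), expPS_mul_expPS_neg hf, ?_⟩, rfl⟩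
  simpa using expPS_mul_expPS_neg hf'

theorem SemiconjBy.C_expPS {c : R} {f g : R⟦X⟧} (h : SemiconjBy (C c) f g) :
    SemiconjBy (C c) (expPS f) (expPS g) := by
  ext m
  simp only [coeff_C_mul, coeff_mul_C, expPS, coeff_mk, mul_sum, sum_mul, mul_smul_comm,
    smul_mul_assoc]
  refine sum_congr rfl fun n _ => ?_
  rw [← coeff_C_mul, ← coeff_mul_C, (h.pow_right n).eq]

theorem map_expPS {S : Type*} [Ring S] [Algebra ℚ S] (φ : R →ₐ[ℚ] S) (f : R⟦X⟧) :
    map φ.toRingHom (expPS f) = expPS (map φ.toRingHom f) := by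
  ext m
  simp only [coeff_map, expPS, coeff_mk, map_sum, ← map_pow]
  refine sum_congr rfl fun n _ => ?_
  exact map_smul φ _ _

end ExpSeries

section LogSeries

open Finset

noncomputable def logOneAdd : ℚ⟦X⟧ :=
  mk fun m => if m = 0 then 0 else (-1 : ℚ) ^ (m + 1) / m

theorem constantCoeff_logOneAdd : constantCoeff logOneAdd = 0 := by
  simp [logOneAdd]

theorem derivative_logOneAdd_mul : d⁄dX ℚ logOneAdd * (1 + X) = 1 := by
  have hd : ∀ n, coeff n (d⁄dX ℚ logOneAdd) = (-1) ^ n := fun n => by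
    rw [coeff_derivative, logOneAdd, coeff_mk, if_neg n.succ_ne_zero]
    field_simp
    push_cast
    ring
  ext m
  rcases m with _ | m
  · rw [mul_add, mul_one, map_add, coeff_zero_mul_X, add_zero, hd, pow_zero, coeff_zero_one]
  · rw [mul_add, mul_one, map_add, coeff_succ_mul_X, hd, hd, coeff_one, if_neg m.succ_ne_zero,
      pow_succ]
    ring

theorem derivative_expPS {S : Type*} [CommRing S] [Algebra ℚ S] {f : S⟦X⟧}
    (hf : constantCoeff f = 0) : d⁄dX S (expPS f) = expPS f * d⁄dX S f := by
  ext m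
  have hterm : ∀ n, d⁄dX S ((((n + 1).factorial : ℚ)⁻¹) • f ^ (n + 1)) =
      (n.factorial : ℚ)⁻¹ • (f ^ n * d⁄dX S f) := fun n => by
    rw [Derivation.map_smul_of_tower, Derivation.leibniz_pow, Nat.add_sub_cancel,
      ← Nat.cast_smul_eq_nsmul ℚ, smul_smul, Nat.factorial_succ]
    congr 1
    push_cast
    field_simp
  calc coeff m (d⁄dX S (expPS f))
      = coeff m (d⁄dX S (∑ n ∈ range (m + 1 + 1), (n.factorial : ℚ)⁻¹ • f ^ n)) := by
        rw [coeff_derivative, coeff_derivative, coeff_expPS_eq_coeff_sum hf le_rfl]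
    _ = coeff m ((∑ n ∈ range (m + 1), (n.factorial : ℚ)⁻¹ • f ^ n) * d⁄dX S f) := by
        rw [sum_range_succ', map_add, map_sum, sum_mul]
        simp only [hterm, pow_zero, Derivation.map_smul_of_tower, Derivation.map_one_eq_zero,
          smul_zero, add_zero, smul_mul_assoc]
    _ = coeff m (expPS f * d⁄dX S f) :=
        coeff_mul_eq_of_coeff_eq (fun i hi => (coeff_expPS_eq_coeff_sum hf hi).symm) fun _ _ => rfl

theorem expPS_logOneAdd : expPS logOneAdd = 1 + X := by
  have hunit : (1 + X : ℚ⟦X⟧) * (1 + X)⁻¹ = 1 :=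
    PowerSeries.mul_inv_cancel _ (by simp)
  have hlog : d⁄dX ℚ logOneAdd = (1 + X)⁻¹ := calc
    _ = d⁄dX ℚ logOneAdd * (1 + X) * (1 + X)⁻¹ := by rw [mul_assoc, hunit, mul_one]
    _ = (1 + X)⁻¹ := by rw [derivative_logOneAdd_mul, one_mul]
  suffices h : expPS logOneAdd * (1 + X)⁻¹ = 1 from calc
    expPS logOneAdd = expPS logOneAdd * (1 + X)⁻¹ * (1 + X) := by
      rw [mul_assoc, mul_comm _ (1 + X), hunit, mul_one]
    _ = 1 + X := by rw [h, one_mul]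
  -- `f = exp(log(1 + X))` satisfies `f' = f / (1 + X)`, so `f / (1 + X)` has derivative zero.
  apply derivative.ext
  · rw [Derivation.leibniz, smul_eq_mul, smul_eq_mul, derivative_inv',
      derivative_expPS constantCoeff_logOneAdd, hlog]
    simp only [map_add, Derivation.map_one_eq_zero, derivative_X, zero_add, mul_one]
    ring
  · simp [constantCoeff_expPS]

end LogSeries

section Substitution

variable {R A : Type*} [CommSemiring R] [Semiring A] [Algebra R A]

/-- `p(ξ) ↦ p(ξe)`: a ring map because the powers of `e` commute. -/
noncomputable def substXMul (e : A) : R⟦X⟧ →+* A⟦X⟧ where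
  toFun p := mk fun m => coeff m p • e ^ m
  map_one' := by
    ext m
    rcases m with _ | m <;> simp [coeff_one]
  map_mul' p q := by
    ext m
    simp only [coeff_mk, coeff_mul, Finset.sum_smul]
    refine Finset.sum_congr rfl fun ij hij => ?_
    rw [Finset.HasAntidiagonal.mem_antidiagonal] at hij
    rw [smul_mul_smul_comm, ← pow_add, hij]
  map_zero' := by
    ext m
    simp
  map_add' p q := by
    ext m
    simp [add_smul]

theorem coeff_substXMul (e : A) (p : R⟦X⟧) (m : ℕ) :
    coeff m (substXMul e p) = coeff m p • e ^ m := by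
  simp [substXMul]

theorem substXMul_X (e : A) : substXMul e (X : R⟦X⟧) = X * C e := by
  ext m
  rw [coeff_substXMul, coeff_mul_C, coeff_X, coeff_X]
  split_ifs with hm <;> simp [hm]

theorem commute_C_substXMul (e : A) (p : R⟦X⟧) : Commute (C e) (substXMul e p) :=
  commute_C_of_forall_coeff fun m => by
    rw [coeff_substXMul]
    exact ((Commute.refl e).pow_right m).smul_right _

theorem expPS_substXMul {A : Type*} [Ring A] [Algebra ℚ A] (e : A) (p : ℚ⟦X⟧) :
    expPS (substXMul e p) = substXMul e (expPS p) := by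
  ext m
  simp only [coeff_substXMul, expPS, coeff_mk, Finset.sum_smul, ← map_pow, smul_assoc]

end Substitution

section Jordanian

variable {A : Type*} [Ring A] [Algebra ℚ A]

theorem expPS_C_mul_mul_C {a b : A} {s : A⟦X⟧} (hba : b * a - a * b = a)
    (hs : constantCoeff s = 0) (hsa : Commute (C a) s) (hsb : Commute (C b) s) :
    expPS (C b * s) * C a = C a * expPS s * expPS (C b * s) := by
  have hbs : constantCoeff (C b * s) = 0 := by rw [map_mul, hs, mul_zero]
  have hconj : SemiconjBy (C a) (s + C b * s) (C b * s) := calc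
    C a * (s + C b * s) = C (a + a * b) * s := by
      rw [map_add, map_mul, add_mul, mul_add, mul_assoc]
    _ = C b * s * C a := by
      rw [← sub_eq_iff_eq_add.1 hba, map_mul, mul_assoc, hsa.eq, mul_assoc]
  rw [mul_assoc, ← expPS_add hs hbs (hsb.symm.mul_right (Commute.refl s)), hconj.C_expPS.eq]

/-- `1 ⊗ log(1 + ξe)`, that is `1 ⊗ 2σ`. -/
noncomputable def oneTmulLog (e : A) : (A ⊗[ℚ] A)⟦X⟧ :=
  map Algebra.TensorProduct.includeRight.toRingHom (substXMul e logOneAdd)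

/-- The Jordanian twist `exp(2h ⊗ σ)`. -/
noncomputable def jordanianTwist (h e : A) : (A ⊗[ℚ] A)⟦X⟧ :=
  expPS (C (h ⊗ₜ 1) * oneTmulLog e)

theorem coeff_oneTmulLog (e : A) (m : ℕ) :
    coeff m (oneTmulLog e) = 1 ⊗ₜ coeff m (substXMul e logOneAdd) := by
  rw [oneTmulLog, coeff_map]
  rfl

theorem constantCoeff_oneTmulLog (e : A) : constantCoeff (oneTmulLog e) = 0 := by
  rw [← coeff_zero_eq_constantCoeff_apply, coeff_oneTmulLog, coeff_substXMul,
    coeff_zero_eq_constantCoeff_apply, constantCoeff_logOneAdd, zero_smul, TensorProduct.tmul_zero]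

theorem commute_C_tmul_one_oneTmulLog (x e : A) :
    Commute (C (x ⊗ₜ[ℚ] (1 : A))) (oneTmulLog e) :=
  commute_C_of_forall_coeff fun m => by
    rw [coeff_oneTmulLog]
    exact (Commute.one_right x).tmul (Commute.one_left _)

theorem commute_C_one_tmul_oneTmulLog (e : A) :
    Commute (C ((1 : A) ⊗ₜ[ℚ] e)) (oneTmulLog e) := by
  have h := (commute_C_substXMul e logOneAdd).map
    (map (Algebra.TensorProduct.includeRight : A →ₐ[ℚ] A ⊗[ℚ] A).toRingHom)
  rwa [map_C] at h

theorem expPS_oneTmulLog (e : A) : expPS (oneTmulLog e) = 1 + X * C ((1 : A) ⊗ₜ[ℚ] e) := by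
  rw [oneTmulLog, ← map_expPS, expPS_substXMul, expPS_logOneAdd, map_add, map_one, substXMul_X]
  simp

theorem isUnit_jordanianTwist (h e : A) : IsUnit (jordanianTwist h e) :=
  isUnit_expPS <| by rw [map_mul, constantCoeff_oneTmulLog, mul_zero]

theorem jordanianTwist_mul_C_tmul_one {h e : A} (hhe : h * e - e * h = e) :
    jordanianTwist h e * C (e ⊗ₜ 1) = (C (e ⊗ₜ 1) + X * C (e ⊗ₜ e)) * jordanianTwist h e := by
  rw [jordanianTwist, expPS_C_mul_mul_C _ (constantCoeff_oneTmulLog e)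
    (commute_C_tmul_one_oneTmulLog _ _) (commute_C_tmul_one_oneTmulLog _ _), expPS_oneTmulLog]
  · congr 1
    rw [mul_add, mul_one, ← mul_assoc, (commute_X _).eq, mul_assoc, ← map_mul,
      Algebra.TensorProduct.tmul_mul_tmul, mul_one, one_mul]
  · rw [Algebra.TensorProduct.tmul_mul_tmul, Algebra.TensorProduct.tmul_mul_tmul, mul_one,
      ← TensorProduct.sub_tmul, hhe]

theorem commute_C_one_tmul_jordanianTwist (h e : A) :
    Commute (C ((1 : A) ⊗ₜ[ℚ] e)) (jordanianTwist h e) :=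
  SemiconjBy.C_expPS <|
    (((Commute.one_left h).tmul (Commute.one_right e)).map C).mul_right
      (commute_C_one_tmul_oneTmulLog e)

end Jordanian

theorem jordanian_twisted_coproduct_general {A : Type*} [Ring A] [Algebra ℚ A]
    (h e : A) (hhe : h * e - e * h = e)
    (Δ : A →ₐ[ℚ] A ⊗[ℚ] A)
    (hΔe : Δ e = e ⊗ₜ[ℚ] (1 : A) + (1 : A) ⊗ₜ[ℚ] e) :
    let σ : PowerSeries A :=
      PowerSeries.mk fun m => if m = 0 then 0 else (((-1 : ℚ) ^ (m + 1)) / (2 * m)) • e ^ m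
    let XX : PowerSeries (A ⊗[ℚ] A) :=
      PowerSeries.mk fun m => (2 : ℚ) • (h ⊗ₜ[ℚ] (PowerSeries.coeff m σ))
    let F : PowerSeries (A ⊗[ℚ] A) := expPS XX
    -- e^{2σ} = 1 + ξe in A[[ξ]]
    let Q : PowerSeries A := PowerSeries.C 1 + PowerSeries.X * PowerSeries.C e
    -- e ⊗ e^{2σ} + 1 ⊗ e
    let De : PowerSeries (A ⊗[ℚ] A) :=
      PowerSeries.C (e ⊗ₜ[ℚ] (1 : A)) + PowerSeries.X * PowerSeries.C (e ⊗ₜ[ℚ] e) +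
        PowerSeries.C ((1 : A) ⊗ₜ[ℚ] e)
    -- e^{2σ} ⊗ e^{2σ} = (1+ξe) ⊗ (1+ξe)
    let QQ : PowerSeries (A ⊗[ℚ] A) :=
      PowerSeries.C ((1 : A) ⊗ₜ[ℚ] (1 : A)) +
        PowerSeries.X * PowerSeries.C (e ⊗ₜ[ℚ] (1 : A) + (1 : A) ⊗ₜ[ℚ] e) +
        PowerSeries.X ^ 2 * PowerSeries.C (e ⊗ₜ[ℚ] e)
    -- e^{2σ} = 1 + ξe
    expPS (PowerSeries.mk fun m => (2 : ℚ) • PowerSeries.coeff m σ) = Q ∧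
    IsUnit F ∧
    F * PowerSeries.C (Δ e) * Ring.inverse F = De ∧
    F * PowerSeries.map Δ.toRingHom Q * Ring.inverse F = QQ := by
  intro σ XX F Q De QQ
  have h2σ : (mk fun m => (2 : ℚ) • coeff m σ) = substXMul e logOneAdd := by
    ext (_ | m)
    · simp [σ, coeff_substXMul, logOneAdd]
    · simp only [σ, coeff_mk, coeff_substXMul, logOneAdd, if_neg m.succ_ne_zero, smul_smul]
      congr 1
      field_simp
  have hF : F = jordanianTwist h e := by
    refine congrArg expPS (ext fun m => ?_)
    rw [coeff_C_mul, coeff_oneTmulLog, ← h2σ, Algebra.TensorProduct.tmul_mul_tmul, one_mul,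
      mul_one]
    simp only [XX, coeff_mk, TensorProduct.tmul_smul]
  have hΔF : F * C (Δ e) = De * F := by
    rw [hΔe, map_add, mul_add, hF, jordanianTwist_mul_C_tmul_one hhe,
      ← (commute_C_one_tmul_jordanianTwist h e).eq, ← add_mul]
  have hU : IsUnit F := hF ▸ isUnit_jordanianTwist h e
  refine ⟨?_, hU, by rw [hΔF, Ring.mul_inverse_cancel_right _ _ hU], ?_⟩
  · rw [h2σ, expPS_substXMul, expPS_logOneAdd, map_add, map_one, substXMul_X]
    simp only [Q, map_one]
  · have hΔQ : F * map Δ.toRingHom Q = (1 + X * De) * F := by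
      rw [map_add, map_mul, map_C, map_C, map_X, AlgHom.toRingHom_eq_coe, RingHom.coe_coe, map_one,
        map_one, mul_add, mul_one, ← mul_assoc, (commute_X F).eq, mul_assoc, hΔF, add_mul 1,
        one_mul, mul_assoc]
    rw [hΔQ, Ring.mul_inverse_cancel_right _ _ hU]
    simp only [De, QQ, ← Algebra.TensorProduct.one_def, map_one, map_add]
    noncomm_ring

/-- for the Jordanian twist `F = exp(2h⊗σ)`, `σ = ½log(1+ξe)`, the twisted
coproduct satisfies `Δ^F(e) = e ⊗ e^{2σ} + 1 ⊗ e` and `Δ^F(e^{2σ}) = e^{2σ} ⊗ e^{2σ}`,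
where `e^{2σ} = 1 + ξe`. -/
theorem jordanian_twisted_coproduct {A : Type*} [Ring A] [Algebra ℚ A]
    (h e : A) (hhe : h * e - e * h = e)
    (Δ : A →ₐ[ℚ] A ⊗[ℚ] A)
    (hΔh : Δ h = h ⊗ₜ[ℚ] (1 : A) + (1 : A) ⊗ₜ[ℚ] h)
    (hΔe : Δ e = e ⊗ₜ[ℚ] (1 : A) + (1 : A) ⊗ₜ[ℚ] e) :
    let σ : PowerSeries A :=
      PowerSeries.mk fun m => if m = 0 then 0 else (((-1 : ℚ) ^ (m + 1)) / (2 * m)) • e ^ m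
    let XX : PowerSeries (A ⊗[ℚ] A) :=
      PowerSeries.mk fun m => (2 : ℚ) • (h ⊗ₜ[ℚ] (PowerSeries.coeff m σ))
    let F : PowerSeries (A ⊗[ℚ] A) := expPS XX
    -- e^{2σ} = 1 + ξe in A[[ξ]]
    let Q : PowerSeries A := PowerSeries.C 1 + PowerSeries.X * PowerSeries.C e
    -- e ⊗ e^{2σ} + 1 ⊗ e
    let De : PowerSeries (A ⊗[ℚ] A) :=
      PowerSeries.C (e ⊗ₜ[ℚ] (1 : A)) + PowerSeries.X * PowerSeries.C (e ⊗ₜ[ℚ] e) +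
        PowerSeries.C ((1 : A) ⊗ₜ[ℚ] e)
    -- e^{2σ} ⊗ e^{2σ} = (1+ξe) ⊗ (1+ξe)
    let QQ : PowerSeries (A ⊗[ℚ] A) :=
      PowerSeries.C ((1 : A) ⊗ₜ[ℚ] (1 : A)) +
        PowerSeries.X * PowerSeries.C (e ⊗ₜ[ℚ] (1 : A) + (1 : A) ⊗ₜ[ℚ] e) +
        PowerSeries.X ^ 2 * PowerSeries.C (e ⊗ₜ[ℚ] e)
    -- e^{2σ} = 1 + ξe
    expPS (PowerSeries.mk fun m => (2 : ℚ) • PowerSeries.coeff m σ) = Q ∧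
    IsUnit F ∧
    F * PowerSeries.C (Δ e) * Ring.inverse F = De ∧
    F * PowerSeries.map Δ.toRingHom Q * Ring.inverse F = QQ :=
  jordanian_twisted_coproduct_general h e hhe Δ hΔe
end
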